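/- arXiv:2507.19832 — 2 statements merged into one kernel-verified Lean document; each statement's English description precedes it below -/
import Mathlib

section
/- For any pmf p on a finite set T and any function f : T → ℝ, and any pmf μ on T, it holds that log(∑_t p(t) e^{f(t)}) ≥ ∑_t μ(t) f(t) - KL(μ ‖ p), with equality iff μ(t) = p(t)e^{f(t)}/∑_s p(s)e^{f(s)} for all t. -/
open Finset

/-- Donsker–Varadhan / Gibbs variational formula on a finite set:
`log Σ_t p(t) e^{f t} ≥ Σ_t μ(t) f(t) - KL(μ‖p)`, with equality iff `μ` is the Gibbs
measure `μ(t) = p(t)e^{f t} / Σ_s p(s)e^{f s}`. -/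
theorem donsker_varadhan_finite
    {T : Type*} [Fintype T] [Nonempty T]
    (p μ : T → ℝ) (f : T → ℝ)
    (hp : ∀ t, 0 ≤ p t) (hp1 : ∑ t, p t = 1)
    (hμ : ∀ t, 0 ≤ μ t) (hμ1 : ∑ t, μ t = 1)
    (hpμ : ∀ t, 0 < μ t → 0 < p t) :
    (∑ t, μ t * f t - ∑ t, μ t * Real.log (μ t / p t)
        ≤ Real.log (∑ t, p t * Real.exp (f t))) ∧
      (Real.log (∑ t, p t * Real.exp (f t))
          = ∑ t, μ t * f t - ∑ t, μ t * Real.log (μ t / p t)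
        ↔ ∀ t, μ t = p t * Real.exp (f t) / ∑ s, p s * Real.exp (f s)) := by
  set Z := ∑ t, p t * Real.exp (f t) with hZdef
  have hZpos : 0 < Z := by
    obtain ⟨t0, ht0⟩ : ∃ t, 0 < p t := by
      by_contra h
      push_neg at h
      have : ∑ t, p t = 0 := Finset.sum_eq_zero (fun t _ => le_antisymm (h t) (hp t))
      rw [this] at hp1; norm_num at hp1
    exact Finset.sum_pos' (fun t _ => mul_nonneg (hp t) (Real.exp_pos _).le)
      ⟨t0, Finset.mem_univ _, mul_pos ht0 (Real.exp_pos _)⟩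
  set q := fun t => p t * Real.exp (f t) / Z with hqdef
  have hq0 : ∀ t, 0 ≤ q t := fun t => div_nonneg (mul_nonneg (hp t) (Real.exp_pos _).le) hZpos.le
  have hq1 : ∑ t, q t = 1 := by
    rw [hqdef, ← Finset.sum_div]
    exact div_self hZpos.ne'
  have hqpos : ∀ t, 0 < μ t → 0 < q t := fun t ht =>
    div_pos (mul_pos (hpμ t ht) (Real.exp_pos _)) hZpos
  -- key identity rewriting KL(μ‖p) in terms of KL(μ‖q)
  have key : ∑ t, μ t * f t - ∑ t, μ t * Real.log (μ t / p t)
      = Real.log Z - ∑ t, μ t * Real.log (μ t / q t) := by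
    have hterm : ∀ t ∈ (Finset.univ : Finset T), μ t * f t - μ t * Real.log (μ t / p t)
        = μ t * Real.log Z - μ t * Real.log (μ t / q t) := by
      intro t _
      rcases eq_or_lt_of_le (hμ t) with h | h
      · simp [← h]
      · have hpt := hpμ t h
        have hlog : Real.log (μ t / q t) = Real.log (μ t / p t) - f t + Real.log Z := by
          rw [hqdef]
          simp only
          rw [div_div_eq_mul_div, Real.log_div (by positivity) (by positivity),
            Real.log_mul hpt.ne' (Real.exp_pos _).ne', Real.log_exp,
            Real.log_mul h.ne' hZpos.ne', Real.log_div h.ne' hpt.ne']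
          ring
        rw [hlog]; ring
    have := Finset.sum_congr rfl hterm
    rw [Finset.sum_sub_distrib, Finset.sum_sub_distrib, ← Finset.sum_mul, hμ1, one_mul] at this
    linarith [this]
  set g := fun t => μ t * Real.log (μ t / q t) - (μ t - q t) with hgdef
  have hg_nonneg : ∀ t, 0 ≤ g t := by
    intro t
    rcases eq_or_lt_of_le (hμ t) with h | h
    · simp [hgdef, ← h, hq0 t]
    · have hqt := hqpos t h
      have hle : Real.log (q t / μ t) ≤ q t / μ t - 1 :=
        Real.log_le_sub_one_of_pos (div_pos hqt h)
      have hflip : Real.log (μ t / q t) = -Real.log (q t / μ t) := by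
        rw [Real.log_div h.ne' hqt.ne', Real.log_div hqt.ne' h.ne']; ring
      have hmul : μ t * (q t / μ t) = q t := mul_div_cancel₀ _ h.ne'
      simp only [hgdef, hflip]
      nlinarith [mul_le_mul_of_nonneg_left hle h.le]
  have hg_eq : ∀ t, g t = 0 ↔ μ t = q t := by
    intro t
    constructor
    · intro hgt
      rcases eq_or_lt_of_le (hμ t) with h | h
      · simp [hgdef, ← h] at hgt
        simpa [← h] using hgt.symm
      · by_contra hne
        have hqt := hqpos t h
        have hratio : q t / μ t ≠ 1 := by
          intro h1
          exact hne ((div_eq_one_iff_eq h.ne').mp h1).symm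
        have hlt : Real.log (q t / μ t) < q t / μ t - 1 :=
          Real.log_lt_sub_one_of_pos (div_pos hqt h) hratio
        have hflip : Real.log (μ t / q t) = -Real.log (q t / μ t) := by
          rw [Real.log_div h.ne' hqt.ne', Real.log_div hqt.ne' h.ne']; ring
        have hmul : μ t * (q t / μ t) = q t := mul_div_cancel₀ _ h.ne'
        simp only [hgdef, hflip] at hgt
        nlinarith [mul_lt_mul_of_pos_left hlt h]
    · intro hq
      rcases eq_or_ne (q t) 0 with h0 | h0
      · simp [hgdef, hq, h0]
      · simp [hgdef, hq, div_self h0]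
  have hDsum : ∑ t, μ t * Real.log (μ t / q t) = ∑ t, g t := by
    simp only [hgdef]
    rw [Finset.sum_sub_distrib, Finset.sum_sub_distrib, hμ1, hq1]
    ring
  have hD_nonneg : 0 ≤ ∑ t, μ t * Real.log (μ t / q t) := by
    rw [hDsum]
    exact Finset.sum_nonneg fun t _ => hg_nonneg t
  constructor
  · rw [key]; linarith
  · rw [key]
    constructor
    · intro h
      have hD0 : ∑ t, g t = 0 := by rw [← hDsum]; linarith
      have := (Finset.sum_eq_zero_iff_of_nonneg (fun t _ => hg_nonneg t)).mp hD0
      intro t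
      exact (hg_eq t).mp (this t (Finset.mem_univ t))
    · intro h
      have : ∀ t, g t = 0 := fun t => (hg_eq t).mpr (h t)
      have hD0 : ∑ t, μ t * Real.log (μ t / q t) = 0 := by
        rw [hDsum]; exact Finset.sum_eq_zero fun t _ => this t
      rw [hD0]; ring
end

section
/- Let G(θ) = -E_{P_X}[log(E_{P_Z}[exp(β E_{P_{Y|X}}[log r_θ(Y|Z)])])] and suppose r_θ(y|z) ≥ c > 0 and r_θ(y|z) ≤ 1 for all θ, y, z. If |log r_{θ₁}(y|z) - log r_{θ₂}(y|z)| < ξ for all y, z, then |G(θ₁) - G(θ₂)| ≤ βξ. -/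
open MeasureTheory Finset

private lemma aux_props {Y Z : Type*} [Fintype Y] [MeasurableSpace Z]
    (PZ : Measure Z) [IsProbabilityMeasure PZ]
    (p : Y → ℝ) (hp : ∀ y, 0 ≤ p y) (hp1 : ∑ y, p y = 1)
    (β c : ℝ) (hβ : 0 < β) (hc : 0 < c)
    (r : Y → Z → ℝ) (hm : ∀ y, Measurable (r y))
    (hb : ∀ y z, c ≤ r y z ∧ r y z ≤ 1) :
    Integrable (fun z => Real.exp (β * ∑ y, p y * Real.log (r y z))) PZ ∧
    0 < ∫ z, Real.exp (β * ∑ y, p y * Real.log (r y z)) ∂PZ := by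
  have hmeas : Measurable fun z => Real.exp (β * ∑ y, p y * Real.log (r y z)) := by
    apply Measurable.exp
    apply Measurable.const_mul
    exact Finset.measurable_sum _ (fun y _ => ((hm y).log).const_mul (p y))
  have hle1 : ∀ z, Real.exp (β * ∑ y, p y * Real.log (r y z)) ≤ 1 := by
    intro z
    rw [Real.exp_le_one_iff]
    have hS : ∑ y, p y * Real.log (r y z) ≤ 0 :=
      Finset.sum_nonpos fun y _ => mul_nonpos_of_nonneg_of_nonpos (hp y)
        (Real.log_nonpos (le_trans hc.le (hb y z).1) (hb y z).2)
    exact mul_nonpos_iff.mpr (Or.inl ⟨hβ.le, hS⟩)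
  have hint : Integrable (fun z => Real.exp (β * ∑ y, p y * Real.log (r y z))) PZ := by
    apply Integrable.mono' (integrable_const (1 : ℝ)) hmeas.aestronglyMeasurable
    filter_upwards with z
    rw [Real.norm_eq_abs, abs_of_pos (Real.exp_pos _)]
    exact hle1 z
  refine ⟨hint, ?_⟩
  have hlb : ∀ z, Real.exp (β * Real.log c) ≤ Real.exp (β * ∑ y, p y * Real.log (r y z)) := by
    intro z
    apply Real.exp_le_exp.mpr
    apply mul_le_mul_of_nonneg_left _ hβ.le
    calc Real.log c = ∑ y, p y * Real.log c := by rw [← Finset.sum_mul, hp1, one_mul]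
    _ ≤ ∑ y, p y * Real.log (r y z) := Finset.sum_le_sum fun y _ =>
        mul_le_mul_of_nonneg_left (Real.log_le_log hc (hb y z).1) (hp y)
  calc (0 : ℝ) < Real.exp (β * Real.log c) := Real.exp_pos _
  _ = ∫ _, Real.exp (β * Real.log c) ∂PZ := by simp
  _ ≤ _ := integral_mono (integrable_const _) hint hlb

private lemma aux_le {Y Z : Type*} [Fintype Y] [MeasurableSpace Z]
    (PZ : Measure Z) [IsProbabilityMeasure PZ]
    (p : Y → ℝ) (hp : ∀ y, 0 ≤ p y) (hp1 : ∑ y, p y = 1)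
    (β c : ℝ) (hβ : 0 < β) (hc : 0 < c)
    (r₁ r₂ : Y → Z → ℝ) (hm₁ : ∀ y, Measurable (r₁ y)) (hm₂ : ∀ y, Measurable (r₂ y))
    (hb₁ : ∀ y z, c ≤ r₁ y z ∧ r₁ y z ≤ 1) (hb₂ : ∀ y z, c ≤ r₂ y z ∧ r₂ y z ≤ 1)
    (ξ : ℝ) (hξ : ∀ y z, Real.log (r₁ y z) - Real.log (r₂ y z) ≤ ξ) :
    Real.log (∫ z, Real.exp (β * ∑ y, p y * Real.log (r₁ y z)) ∂PZ) ≤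
      β * ξ + Real.log (∫ z, Real.exp (β * ∑ y, p y * Real.log (r₂ y z)) ∂PZ) := by
  obtain ⟨hint₁, hpos₁⟩ := aux_props PZ p hp hp1 β c hβ hc r₁ hm₁ hb₁
  obtain ⟨hint₂, hpos₂⟩ := aux_props PZ p hp hp1 β c hβ hc r₂ hm₂ hb₂
  have hpt : ∀ z, Real.exp (β * ∑ y, p y * Real.log (r₁ y z)) ≤
      Real.exp (β * ξ) * Real.exp (β * ∑ y, p y * Real.log (r₂ y z)) := by
    intro z
    rw [← Real.exp_add]
    apply Real.exp_le_exp.mpr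
    have hSd : ∑ y, p y * Real.log (r₁ y z) - ∑ y, p y * Real.log (r₂ y z) ≤ ξ := by
      rw [← Finset.sum_sub_distrib]
      calc ∑ y, (p y * Real.log (r₁ y z) - p y * Real.log (r₂ y z))
          = ∑ y, p y * (Real.log (r₁ y z) - Real.log (r₂ y z)) := by
            simp [mul_sub]
      _ ≤ ∑ y, p y * ξ := Finset.sum_le_sum fun y _ =>
            mul_le_mul_of_nonneg_left (hξ y z) (hp y)
      _ = ξ := by rw [← Finset.sum_mul, hp1, one_mul]
    nlinarith [hβ.le]
  have hI : (∫ z, Real.exp (β * ∑ y, p y * Real.log (r₁ y z)) ∂PZ) ≤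
      Real.exp (β * ξ) * ∫ z, Real.exp (β * ∑ y, p y * Real.log (r₂ y z)) ∂PZ := by
    rw [← integral_const_mul]
    exact integral_mono hint₁ (hint₂.const_mul _) hpt
  calc Real.log _ ≤ Real.log (Real.exp (β * ξ) *
        ∫ z, Real.exp (β * ∑ y, p y * Real.log (r₂ y z)) ∂PZ) :=
      Real.log_le_log hpos₁ hI
  _ = β * ξ + Real.log (∫ z, Real.exp (β * ∑ y, p y * Real.log (r₂ y z)) ∂PZ) := by
      rw [Real.log_mul (Real.exp_ne_zero _) hpos₂.ne', Real.log_exp]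

/-- Stability of the MA-IB objective: if the log-likelihoods of two classifiers are
uniformly `ξ`-close, then the objectives `G(θ₁)` and `G(θ₂)` differ by at most `βξ`. -/
theorem G_stability
    {X Y : Type*} [Fintype X] [Fintype Y]
    {Z : Type*} [MeasurableSpace Z] (PZ : Measure Z) [IsProbabilityMeasure PZ]
    (pX : X → ℝ) (hpX : ∀ x, 0 ≤ pX x) (hpX1 : ∑ x, pX x = 1)
    (pyx : X → Y → ℝ) (hpyx : ∀ x, (∀ y, 0 ≤ pyx x y) ∧ ∑ y, pyx x y = 1)
    (β : ℝ) (hβ : 0 < β) (c : ℝ) (hc : 0 < c)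
    (r₁ r₂ : Y → Z → ℝ)
    (hr₁m : ∀ y, Measurable (r₁ y)) (hr₂m : ∀ y, Measurable (r₂ y))
    (hr₁ : ∀ y z, c ≤ r₁ y z ∧ r₁ y z ≤ 1) (hr₂ : ∀ y z, c ≤ r₂ y z ∧ r₂ y z ≤ 1)
    (hr₁1 : ∀ z, ∑ y, r₁ y z = 1) (hr₂1 : ∀ z, ∑ y, r₂ y z = 1)
    (ξ : ℝ)
    (hclose : ∀ y z, |Real.log (r₁ y z) - Real.log (r₂ y z)| < ξ) :
    |(-∑ x, pX x * Real.log (∫ z,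
          Real.exp (β * ∑ y, pyx x y * Real.log (r₁ y z)) ∂PZ)) -
      (-∑ x, pX x * Real.log (∫ z,
          Real.exp (β * ∑ y, pyx x y * Real.log (r₂ y z)) ∂PZ))|
      ≤ β * ξ := by
  have key : ∀ x : X,
      |Real.log (∫ z, Real.exp (β * ∑ y, pyx x y * Real.log (r₂ y z)) ∂PZ) -
        Real.log (∫ z, Real.exp (β * ∑ y, pyx x y * Real.log (r₁ y z)) ∂PZ)| ≤ β * ξ := by
    intro x
    have h1 := aux_le PZ (pyx x) (hpyx x).1 (hpyx x).2 β c hβ hc r₁ r₂ hr₁m hr₂m hr₁ hr₂ ξ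
      (fun y z => (abs_lt.mp (hclose y z)).2.le)
    have h2 := aux_le PZ (pyx x) (hpyx x).1 (hpyx x).2 β c hβ hc r₂ r₁ hr₂m hr₁m hr₂ hr₁ ξ
      (fun y z => by linarith [(abs_lt.mp (hclose y z)).1])
    rw [abs_le]
    constructor <;> linarith
  have hrw : (-∑ x, pX x * Real.log (∫ z,
          Real.exp (β * ∑ y, pyx x y * Real.log (r₁ y z)) ∂PZ)) -
      (-∑ x, pX x * Real.log (∫ z,
          Real.exp (β * ∑ y, pyx x y * Real.log (r₂ y z)) ∂PZ)) =
      ∑ x, pX x * (Real.log (∫ z, Real.exp (β * ∑ y, pyx x y * Real.log (r₂ y z)) ∂PZ) -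
        Real.log (∫ z, Real.exp (β * ∑ y, pyx x y * Real.log (r₁ y z)) ∂PZ)) := by
    rw [neg_sub_neg, ← Finset.sum_sub_distrib]
    simp [mul_sub]
  rw [hrw]
  calc |∑ x, pX x * _| ≤ ∑ x, |pX x * (Real.log (∫ z, Real.exp (β * ∑ y, pyx x y * Real.log (r₂ y z)) ∂PZ) -
        Real.log (∫ z, Real.exp (β * ∑ y, pyx x y * Real.log (r₁ y z)) ∂PZ))| :=
      Finset.abs_sum_le_sum_abs _ _
  _ ≤ ∑ x, pX x * (β * ξ) := Finset.sum_le_sum fun x _ => by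
      rw [abs_mul, abs_of_nonneg (hpX x)]
      exact mul_le_mul_of_nonneg_left (key x) (hpX x)
  _ = β * ξ := by rw [← Finset.sum_mul, hpX1, one_mul]
end
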